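/- Let b : ℝ^d × ℝ^d × P₂(ℝ^{2d}) → ℝ^d satisfy: (i) |b(z,γ) − b(z̄,γ̃)| ≤ K_b |z − z̄| + K_I W₂(γ, γ̃) for all z = (x,y), z̄ = (x̄,ȳ) ∈ ℝ^{2d} and γ, γ̃ ∈ P₂(ℝ^{2d}), with constants K_b, K_I > 0; and (ii) there exist θ, r, R > 0 and r₀ ∈ (−1,1) such that for all x, y, x̄, ȳ ∈ ℝ^d with |x−x̄|² + |y−ȳ|² ≥ R² and all μ ∈ P₂(ℝ^{2d}): ⟨r²(x−x̄) + r r₀ (y−ȳ), y−ȳ⟩ + ⟨(y−ȳ) + r r₀ (x−x̄), b(x,y,μ) − b(x̄,ȳ,μ)⟩ ≤ −θ (|x−x̄|² + |y−ȳ|²). Then there exists a constant C₀ > 0, depending only on r, r₀, K_b and θ, such that for every N ≥ 1 and all 𝐱 = (x^i), 𝐲 = (y^i), 𝐱̄ = (x̄^i), 𝐲̄ = (ȳ^i) ∈ (ℝ^d)^N, writing b^N(𝐱,𝐲)_i = b( x^i, y^i, (1/N) Σ_j δ_{(x^j,y^j)} ): ⟨r²(𝐱−𝐱̄) + r r₀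 (𝐲−𝐲̄), 𝐲−𝐲̄⟩ + ⟨(𝐲−𝐲̄) + r r₀(𝐱−𝐱̄), b^N(𝐱,𝐲) − b^N(𝐱̄,𝐲̄)⟩ ≤ (−θ + K_I(1+|r r₀|)) Σ_{i=1}^N (|x^i−x̄^i|² + |y^i−ȳ^i|²) + (C₀ + θ) Σ_{i=1}^N (|x^i−x̄^i|² + |y^i−ȳ^i|²) · 1[ |x^i−x̄^i|² + |y^i−ȳ^i|² < R² ]. -/

import Mathlib

open MeasureTheory ProbabilityTheory
open scoped ENNReal NNReal RealInnerProductSpace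

/-- `π` is a coupling of `μ` and `ν`. -/
def IsCoupling {α β : Type*} [MeasurableSpace α] [MeasurableSpace β]
    (π : Measure (α × β)) (μ : Measure α) (ν : Measure β) : Prop :=
  π.map Prod.fst = μ ∧ π.map Prod.snd = ν

/-- The squared `L²`-Wasserstein distance, as an extended nonnegative real. -/
noncomputable def W2sq {E : Type*} [MeasurableSpace E] [NormedAddCommGroup E]
    (μ ν : Measure E) : ℝ≥0∞ :=
  ⨅ (π : Measure (E × E)) (_ : IsCoupling π μ ν), ∫⁻ p, (‖p.1 - p.2‖₊ : ℝ≥0∞) ^ 2 ∂π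

/-- The `L²`-Wasserstein distance, as a real number. -/
noncomputable def W2r {E : Type*} [MeasurableSpace E] [NormedAddCommGroup E]
    (μ ν : Measure E) : ℝ := Real.sqrt (W2sq μ ν).toReal

/-- A probability measure with finite second moment (an element of `P₂`). -/
def MemP2 {E : Type*} [MeasurableSpace E] [NormedAddCommGroup E] (μ : Measure E) : Prop :=
  IsProbabilityMeasure μ ∧ ∫⁻ x, (‖x‖₊ : ℝ≥0∞) ^ 2 ∂μ < ∞

/-- The empirical measure `(1/N) ∑ᵢ δ_{z i}` of the points `z 1, …, z N`. -/
noncomputable def empMeas {E : Type*} [MeasurableSpace E] {N : ℕ} (z : Fin N → E) :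
    Measure E := (N : ℝ≥0∞)⁻¹ • ∑ i, Measure.dirac (z i)

/-- The identification `ℝ^d × ℝ^d ≅ ℝ^{2d}` (with the Euclidean norm
`‖(x,y)‖² = ‖x‖² + ‖y‖²`). -/
noncomputable def pairE {d : ℕ} (x y : EuclideanSpace ℝ (Fin d)) :
    EuclideanSpace ℝ (Fin d ⊕ Fin d) :=
  WithLp.toLp 2 (fun i => Sum.elim (fun j => x j) (fun j => y j) i)

/-!
The drift difference for particle `i` splits as `b(xⁱ, yⁱ, μ) - b(x̄ⁱ, ȳⁱ, μ)` plus
`b(x̄ⁱ, ȳⁱ, μ) - b(x̄ⁱ, ȳⁱ, ν)`, where `μ, ν` are the two empirical measures. For the first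
part the one-particle dissipativity applies far from the diagonal, and near it the Lipschitz
bound gives a quadratic bound with `C₀ = r² + |r r₀| + K_b (1 + |r r₀|)`. The second part is
controlled by `K_I W₂(μ, ν)`; the empirical coupling `(1/N) ∑ δ_{(zⁱ, z̄ⁱ)}` gives
`W₂(μ, ν)² ≤ (1/N) ∑ |zⁱ - z̄ⁱ|²`, and Cauchy–Schwarz over `i` turns this into the
`K_I (1 + |r r₀|)` term.
-/

open Finset

section EmpiricalMeasure

variable {α β : Type*} [MeasurableSpace α] [MeasurableSpace β] {N : ℕ}

lemma map_empMeas (z : Fin N → α) {f : α → β} (hf : Measurable f) :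
    (empMeas z).map f = empMeas (f ∘ z) := by
  simp [empMeas, Measure.map_finset_sum' hf.aemeasurable, Measure.map_dirac' hf]

lemma isCoupling_empMeas (z : Fin N → α) (w : Fin N → β) :
    IsCoupling (empMeas fun i => (z i, w i)) (empMeas z) (empMeas w) :=
  ⟨map_empMeas _ measurable_fst, map_empMeas _ measurable_snd⟩

lemma lintegral_empMeas (z : Fin N → α) {f : α → ℝ≥0∞} (hf : Measurable f) :
    ∫⁻ a, f a ∂empMeas z = (N : ℝ≥0∞)⁻¹ * ∑ i, f (z i) := by
  simp [empMeas, lintegral_smul_measure, lintegral_dirac' _ hf]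

lemma isProbabilityMeasure_empMeas (hN : N ≠ 0) (z : Fin N → α) :
    IsProbabilityMeasure (empMeas z) :=
  ⟨by simp [empMeas, ENNReal.inv_mul_cancel (Nat.cast_ne_zero.2 hN) (ENNReal.natCast_ne_top N)]⟩

end EmpiricalMeasure

section Wasserstein

variable {E : Type*} [MeasurableSpace E] [NormedAddCommGroup E] {N : ℕ}

lemma W2sq_le_of_isCoupling {π : Measure (E × E)} {μ ν : Measure E} (hπ : IsCoupling π μ ν) :
    W2sq μ ν ≤ ∫⁻ p, (‖p.1 - p.2‖₊ : ℝ≥0∞) ^ 2 ∂π :=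
  iInf₂_le π hπ

lemma W2sq_self (μ : Measure E) : W2sq μ μ = 0 := by
  have hdiag : Measurable fun z : E => (z, z) := measurable_id.prodMk measurable_id
  have hcoupling : IsCoupling (μ.map fun z => (z, z)) μ μ := by
    constructor <;> rw [Measure.map_map (by fun_prop) hdiag] <;> exact Measure.map_id
  refine le_antisymm ((W2sq_le_of_isCoupling hcoupling).trans ?_) zero_le
  exact (lintegral_map_le _ _).trans (by simp)

lemma W2r_self (μ : Measure E) : W2r μ μ = 0 := by
  simp [W2r, W2sq_self]

variable [BorelSpace E]

lemma memP2_empMeas (hN : N ≠ 0) (z : Fin N → E) : MemP2 (empMeas z) := by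
  refine ⟨isProbabilityMeasure_empMeas hN z, ?_⟩
  rw [lintegral_empMeas z (by fun_prop)]
  exact ENNReal.mul_lt_top (by simpa using Nat.pos_of_ne_zero hN)
    (ENNReal.sum_lt_top.2 fun i _ => ENNReal.pow_lt_top ENNReal.coe_lt_top)

variable [SecondCountableTopology E]

lemma W2sq_empMeas_le (z w : Fin N → E) :
    W2sq (empMeas z) (empMeas w) ≤ (N : ℝ≥0∞)⁻¹ * ∑ i, (‖z i - w i‖₊ : ℝ≥0∞) ^ 2 :=
  (W2sq_le_of_isCoupling (isCoupling_empMeas z w)).trans_eq (lintegral_empMeas _ (by fun_prop))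

lemma W2r_empMeas_le (z w : Fin N → E) :
    W2r (empMeas z) (empMeas w) ≤ √((∑ i, ‖z i - w i‖ ^ 2) / N) := by
  refine Real.sqrt_le_sqrt ?_
  have hfinite : (N : ℝ≥0∞)⁻¹ * ∑ i, (‖z i - w i‖₊ : ℝ≥0∞) ^ 2 ≠ ∞ := by
    rcases eq_or_ne N 0 with rfl | hN
    · simp
    exact ENNReal.mul_ne_top (by simp [hN])
      (ENNReal.sum_ne_top.2 fun i _ => ENNReal.pow_ne_top ENNReal.coe_ne_top)
  refine (ENNReal.toReal_mono hfinite (W2sq_empMeas_le z w)).trans_eq ?_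
  simp [ENNReal.toReal_sum, div_eq_inv_mul]

end Wasserstein

section PairE

variable {d : ℕ}

lemma pairE_sub (x y x' y' : EuclideanSpace ℝ (Fin d)) :
    pairE x y - pairE x' y' = pairE (x - x') (y - y') := by
  ext i
  cases i <;> simp [pairE]

lemma norm_pairE_sq (x y : EuclideanSpace ℝ (Fin d)) :
    ‖pairE x y‖ ^ 2 = ‖x‖ ^ 2 + ‖y‖ ^ 2 := by
  simp [EuclideanSpace.norm_sq_eq, Fintype.sum_sum_type, pairE]

lemma norm_pairE_sub (x y x' y' : EuclideanSpace ℝ (Fin d)) :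
    ‖pairE x y - pairE x' y'‖ = √(‖x - x'‖ ^ 2 + ‖y - y'‖ ^ 2) := by
  rw [pairE_sub, ← norm_pairE_sq, Real.sqrt_sq (norm_nonneg _)]

lemma W2r_empMeas_pairE_le {N : ℕ} (x y x' y' : Fin N → EuclideanSpace ℝ (Fin d)) :
    W2r (empMeas fun i => pairE (x i) (y i)) (empMeas fun i => pairE (x' i) (y' i))
      ≤ √((∑ i, (‖x i - x' i‖ ^ 2 + ‖y i - y' i‖ ^ 2)) / N) := by
  simpa only [pairE_sub, norm_pairE_sq] using
    W2r_empMeas_le (fun i => pairE (x i) (y i)) (fun i => pairE (x' i) (y' i))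

end PairE

lemma sum_sqrt_mul_sqrt_mean_le {ι : Type*} [Fintype ι] {s : ι → ℝ} (hs : ∀ i, 0 ≤ s i) :
    ∑ i, √(s i) * √((∑ j, s j) / Fintype.card ι) ≤ ∑ j, s j := by
  rcases isEmpty_or_nonempty ι with hι | hι
  · simp
  have hS : 0 ≤ ∑ j, s j := sum_nonneg fun j _ => hs j
  have hmean : ∑ _i : ι, (∑ j, s j) / Fintype.card ι = ∑ j, s j := by
    rw [sum_const, card_univ, nsmul_eq_mul, mul_div_cancel₀ _ (by positivity)]
  calc ∑ i, √(s i) * √((∑ j, s j) / Fintype.card ι)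
      ≤ √(∑ j, s j) * √(∑ _i : ι, (∑ j, s j) / Fintype.card ι) :=
        Real.sum_sqrt_mul_sqrt_le _ hs fun _ => by positivity
    _ = ∑ j, s j := by rw [hmean, Real.mul_self_sqrt hS]

section DissipationForm

variable {F : Type*} [NormedAddCommGroup F] [InnerProductSpace ℝ F]

/-- In the statement `u = x - x̄`, `v = y - ȳ` and `w` is a difference of drift values. -/
def dissipationForm (r r₀ : ℝ) (u v w : F) : ℝ :=
  ⟪r ^ 2 • u + (r * r₀) • v, v⟫ + ⟪v + (r * r₀) • u, w⟫

lemma dissipationForm_add_right (r r₀ : ℝ) (u v w w' : F) :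
    dissipationForm r r₀ u v (w + w') = dissipationForm r r₀ u v w + ⟪v + (r * r₀) • u, w'⟫ := by
  simp only [dissipationForm, inner_add_right]
  ring

lemma norm_add_smul_le_sqrt (c : ℝ) (u v : F) :
    ‖v + c • u‖ ≤ (1 + |c|) * √(‖u‖ ^ 2 + ‖v‖ ^ 2) := by
  have hu : ‖u‖ ≤ √(‖u‖ ^ 2 + ‖v‖ ^ 2) :=
    Real.le_sqrt_of_sq_le (le_add_of_nonneg_right (sq_nonneg _))
  have hv : ‖v‖ ≤ √(‖u‖ ^ 2 + ‖v‖ ^ 2) :=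
    Real.le_sqrt_of_sq_le (le_add_of_nonneg_left (sq_nonneg _))
  calc ‖v + c • u‖ ≤ ‖v‖ + |c| * ‖u‖ := by
        simpa [norm_smul] using norm_add_le v (c • u)
    _ ≤ (1 + |c|) * √(‖u‖ ^ 2 + ‖v‖ ^ 2) := by nlinarith [abs_nonneg c]

lemma inner_smul_add_smul_le (a c : ℝ) (u v : F) :
    ⟪a ^ 2 • u + c • v, v⟫ ≤ (a ^ 2 + |c|) * (‖u‖ ^ 2 + ‖v‖ ^ 2) := by
  have hnorm : ‖a ^ 2 • u + c • v‖ ≤ a ^ 2 * ‖u‖ + |c| * ‖v‖ := by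
    have := norm_add_le (a ^ 2 • u) (c • v)
    rwa [norm_smul, norm_smul, Real.norm_eq_abs, Real.norm_eq_abs, abs_of_nonneg (sq_nonneg a)]
      at this
  have hprod := mul_le_mul_of_nonneg_right hnorm (norm_nonneg v)
  nlinarith [real_inner_le_norm (a ^ 2 • u + c • v) v, sq_nonneg (‖u‖ - ‖v‖), sq_nonneg a,
    abs_nonneg c, norm_nonneg u, norm_nonneg v]

lemma dissipationForm_le_of_norm_le {r r₀ K : ℝ} {u v w : F}
    (hw : ‖w‖ ≤ K * √(‖u‖ ^ 2 + ‖v‖ ^ 2)) :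
    dissipationForm r r₀ u v w
      ≤ (r ^ 2 + |r * r₀| + K * (1 + |r * r₀|)) * (‖u‖ ^ 2 + ‖v‖ ^ 2) := by
  have hdrift : ⟪v + (r * r₀) • u, w⟫ ≤ K * (1 + |r * r₀|) * (‖u‖ ^ 2 + ‖v‖ ^ 2) :=
    calc ⟪v + (r * r₀) • u, w⟫ ≤ ‖v + (r * r₀) • u‖ * ‖w‖ := real_inner_le_norm _ _
      _ ≤ ((1 + |r * r₀|) * √(‖u‖ ^ 2 + ‖v‖ ^ 2)) * (K * √(‖u‖ ^ 2 + ‖v‖ ^ 2)) :=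
        mul_le_mul (norm_add_smul_le_sqrt _ u v) hw (norm_nonneg _) (by positivity)
      _ = K * (1 + |r * r₀|) * (‖u‖ ^ 2 + ‖v‖ ^ 2) := by
        rw [mul_mul_mul_comm, Real.mul_self_sqrt (by positivity)]
        ring
  have := inner_smul_add_smul_le r (r * r₀) u v
  rw [dissipationForm]
  linarith

lemma dissipationForm_le_ite {r r₀ K θ R : ℝ} {u v w : F}
    (hw : ‖w‖ ≤ K * √(‖u‖ ^ 2 + ‖v‖ ^ 2))
    (hfar : R ^ 2 ≤ ‖u‖ ^ 2 + ‖v‖ ^ 2 →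
      dissipationForm r r₀ u v w ≤ -θ * (‖u‖ ^ 2 + ‖v‖ ^ 2)) :
    dissipationForm r r₀ u v w
      ≤ -θ * (‖u‖ ^ 2 + ‖v‖ ^ 2) + (r ^ 2 + |r * r₀| + K * (1 + |r * r₀|) + θ)
          * (if ‖u‖ ^ 2 + ‖v‖ ^ 2 < R ^ 2 then ‖u‖ ^ 2 + ‖v‖ ^ 2 else 0) := by
  split_ifs with hnear
  · linarith [dissipationForm_le_of_norm_le (r := r) (r₀ := r₀) hw]
  · simpa using hfar (not_lt.1 hnear)

lemma sum_inner_le_of_norm_le_mean {ι : Type*} [Fintype ι] {c K : ℝ} (hK : 0 ≤ K)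
    {u v w : ι → F}
    (hw : ∀ i, ‖w i‖ ≤ K * √((∑ j, (‖u j‖ ^ 2 + ‖v j‖ ^ 2)) / Fintype.card ι)) :
    ∑ i, ⟪v i + c • u i, w i⟫ ≤ K * (1 + |c|) * ∑ i, (‖u i‖ ^ 2 + ‖v i‖ ^ 2) := by
  set s : ι → ℝ := fun i => ‖u i‖ ^ 2 + ‖v i‖ ^ 2
  have hterm : ∀ i, ⟪v i + c • u i, w i⟫
      ≤ K * (1 + |c|) * (√(s i) * √((∑ j, s j) / Fintype.card ι)) := fun i =>
    calc ⟪v i + c • u i, w i⟫ ≤ ‖v i + c • u i‖ * ‖w i‖ := real_inner_le_norm _ _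
      _ ≤ ((1 + |c|) * √(s i)) * (K * √((∑ j, s j) / Fintype.card ι)) :=
        mul_le_mul (norm_add_smul_le_sqrt c _ _) (hw i) (norm_nonneg _) (by positivity)
      _ = K * (1 + |c|) * (√(s i) * √((∑ j, s j) / Fintype.card ι)) := by ring
  calc ∑ i, ⟪v i + c • u i, w i⟫
      ≤ K * (1 + |c|) * ∑ i, √(s i) * √((∑ j, s j) / Fintype.card ι) := by
        rw [mul_sum]
        exact sum_le_sum fun i _ => hterm i
    _ ≤ K * (1 + |c|) * ∑ i, s i :=
        mul_le_mul_of_nonneg_left (sum_sqrt_mul_sqrt_mean_le fun i => by positivity)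
          (by positivity)

end DissipationForm

theorem statement_8 (K_b θ r r₀ : ℝ) (hKb : 0 < K_b) :
    ∃ C₀ : ℝ, 0 < C₀ ∧
      ∀ (d : ℕ) (K_I R : ℝ), 0 < K_I → 0 < R →
      ∀ b : EuclideanSpace ℝ (Fin d) → EuclideanSpace ℝ (Fin d) →
          Measure (EuclideanSpace ℝ (Fin d ⊕ Fin d)) → EuclideanSpace ℝ (Fin d),
      -- Lipschitz condition
      (∀ x y xbar ybar γ γtil, MemP2 γ → MemP2 γtil →
        ‖b x y γ - b xbar ybar γtil‖
          ≤ K_b * ‖pairE x y - pairE xbar ybar‖ + K_I * W2r γ γtil) →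
      -- partial dissipativity, uniformly over measures in P₂
      (∀ x y xbar ybar : EuclideanSpace ℝ (Fin d),
        R ^ 2 ≤ ‖x - xbar‖ ^ 2 + ‖y - ybar‖ ^ 2 →
        ∀ μ : Measure (EuclideanSpace ℝ (Fin d ⊕ Fin d)), MemP2 μ →
          ⟪(r ^ 2) • (x - xbar) + (r * r₀) • (y - ybar), y - ybar⟫
            + ⟪(y - ybar) + (r * r₀) • (x - xbar), b x y μ - b xbar ybar μ⟫
          ≤ -θ * (‖x - xbar‖ ^ 2 + ‖y - ybar‖ ^ 2)) →
      -- the N-particle estimate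
      ∀ N : ℕ, 1 ≤ N → ∀ x y xbar ybar : Fin N → EuclideanSpace ℝ (Fin d),
        (∑ i, ⟪(r ^ 2) • (x i - xbar i) + (r * r₀) • (y i - ybar i), y i - ybar i⟫)
          + ∑ i, ⟪(y i - ybar i) + (r * r₀) • (x i - xbar i),
              b (x i) (y i) (empMeas fun j => pairE (x j) (y j))
                - b (xbar i) (ybar i) (empMeas fun j => pairE (xbar j) (ybar j))⟫
        ≤ (-θ + K_I * (1 + |r * r₀|)) * ∑ i, (‖x i - xbar i‖ ^ 2 + ‖y i - ybar i‖ ^ 2)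
          + (C₀ + θ) * ∑ i, (if ‖x i - xbar i‖ ^ 2 + ‖y i - ybar i‖ ^ 2 < R ^ 2
              then ‖x i - xbar i‖ ^ 2 + ‖y i - ybar i‖ ^ 2 else 0) := by
  refine ⟨r ^ 2 + |r * r₀| + K_b * (1 + |r * r₀|), by positivity, ?_⟩
  intro d K_I R hKI _ b hLip hDiss N hN x y xbar ybar
  set μ := empMeas fun j => pairE (x j) (y j)
  set ν := empMeas fun j => pairE (xbar j) (ybar j)
  have hμ : MemP2 μ := memP2_empMeas (by omega) _
  have hν : MemP2 ν := memP2_empMeas (by omega) _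
  have hsameMeasure := fun i => dissipationForm_le_ite (r := r) (r₀ := r₀) (θ := θ) (R := R)
    (by simpa [W2r_self, norm_pairE_sub] using hLip (x i) (y i) (xbar i) (ybar i) μ μ hμ hμ)
    (fun hfar => hDiss (x i) (y i) (xbar i) (ybar i) hfar μ hμ)
  have hmeanField := sum_inner_le_of_norm_le_mean (c := r * r₀) hKI.le
    (u := fun i => x i - xbar i) (v := fun i => y i - ybar i) fun i => by
      rw [Fintype.card_fin]
      simpa using (hLip (xbar i) (ybar i) (xbar i) (ybar i) μ ν hμ hν).trans
        (add_le_add_right (mul_le_mul_of_nonneg_left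
          (W2r_empMeas_pairE_le x y xbar ybar) hKI.le) _)
  calc _ = ∑ i, (dissipationForm r r₀ (x i - xbar i) (y i - ybar i)
          (b (x i) (y i) μ - b (xbar i) (ybar i) μ)
        + ⟪(y i - ybar i) + (r * r₀) • (x i - xbar i),
          b (xbar i) (ybar i) μ - b (xbar i) (ybar i) ν⟫) := by
        rw [← sum_add_distrib]
        refine sum_congr rfl fun i _ => ?_
        rw [← dissipationForm_add_right, sub_add_sub_cancel]
        rfl
    _ ≤ _ := by
        rw [sum_add_distrib]
        refine (add_le_add (sum_le_sum fun i _ => hsameMeasure i) hmeanField).trans_eq ?_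
        rw [sum_add_distrib, ← mul_sum, ← mul_sum]
        ring
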